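/- For |q|<1 and complex x, ∑_{j,k,ℓ≥0} (x;q²)_k x^{j+ℓ} (−1)^{j+k} q^{(j+k+ℓ)(j+k+ℓ−1)+ℓ²+3k} / ((q;q)_j (q²;q²)_k (q²;q²)_ℓ) = (q³;q²)_∞ (x;q²)_∞. -/

import Mathlib

open scoped BigOperators

noncomputable def qp (a q : ℂ) (n : ℕ) : ℂ := ∏ i ∈ Finset.range n, (1 - a * q ^ i)

noncomputable def qpInf (a q : ℂ) : ℂ := ∏' i : ℕ, (1 - a * q ^ i)

/-!
Put `Q = q²` and `n = j + l`. Since `(n+k)(n+k-1) = n(n-1) + k(k-1) + 2nk`, the summand is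
`(x;Q)_k (-1)^k Q^(k choose 2) q^(3k) / (Q;Q)_k` times a term depending only on `(j, l)` and
`y = x Q^k`. For fixed `n` the finite identity
`∑_{j+l=n} (-1)^j q^(l²) / ((q;q)_j (Q;Q)_l) = (-1)^n / (Q;Q)_n`
turns the sum over `(j, l)` into Euler's series `∑_n (-1)^n Q^(n choose 2) yⁿ / (Q;Q)_n = (y;Q)_∞`.
Then `(x;Q)_k (x Q^k;Q)_∞ = (x;Q)_∞`, and the remaining sum over `k` is Euler's series at `q³`.
The triple series converges absolutely, which justifies the rearrangements.
-/

open Filter Finset Topology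

lemma Nat.add_choose_two (a b : ℕ) : (a + b).choose 2 = a.choose 2 + b.choose 2 + a * b := by
  induction b with
  | zero => simp
  | succ b ih =>
    rw [← add_assoc, Nat.choose_succ_succ', Nat.choose_succ_succ' b, ih]
    simp only [Nat.choose_one_right]
    ring

lemma Nat.two_mul_choose_two_intCast (m : ℕ) : 2 * (m.choose 2 : ℤ) = m * (m - 1) := by
  induction m with
  | zero => simp
  | succ m ih =>
    rw [Nat.choose_succ_succ', Nat.choose_one_right]
    push_cast
    linear_combination ih

lemma summable_pow_mul_pow_choose_two {A r : ℝ} (hr₀ : 0 ≤ r) (hr : r < 1) :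
    Summable fun n : ℕ => A ^ n * r ^ n.choose 2 := by
  have hsmall : ∀ᶠ n in atTop, |A| * r ^ n ≤ 1 / 2 := by
    have := (tendsto_pow_atTop_nhds_zero_of_lt_one hr₀ hr).const_mul |A|
    rw [mul_zero] at this
    exact this.eventually_le_const (by norm_num)
  refine summable_of_ratio_norm_eventually_le (by norm_num : (1 / 2 : ℝ) < 1) ?_
  filter_upwards [hsmall] with n hn
  have hC : (n + 1).choose 2 = n.choose 2 + n := by
    rw [Nat.choose_succ_succ', Nat.choose_one_right, add_comm]
  calc ‖A ^ (n + 1) * r ^ (n + 1).choose 2‖ = ‖A ^ n * r ^ n.choose 2‖ * (|A| * r ^ n) := by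
        rw [hC]; simp only [norm_mul, norm_pow, Real.norm_eq_abs, abs_of_nonneg hr₀]; ring
    _ ≤ 1 / 2 * ‖A ^ n * r ^ n.choose 2‖ := by
        rw [mul_comm (1 / 2 : ℝ)]; exact mul_le_mul_of_nonneg_left hn (norm_nonneg _)

lemma norm_pow_lt_one {q : ℂ} (hq : ‖q‖ < 1) {n : ℕ} (hn : n ≠ 0) : ‖q ^ n‖ < 1 := by
  rw [norm_pow]; exact pow_lt_one₀ (norm_nonneg q) hq hn

lemma qp_zero (a q : ℂ) : qp a q 0 = 1 := prod_range_zero _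

lemma qp_succ (a q : ℂ) (n : ℕ) : qp a q (n + 1) = qp a q n * (1 - a * q ^ n) :=
  prod_range_succ _ _

lemma norm_mul_pow_le {a q : ℂ} (hq : ‖q‖ ≤ 1) (i : ℕ) : ‖a * q ^ i‖ ≤ ‖a‖ := by
  rw [norm_mul, norm_pow]
  exact mul_le_of_le_one_right (norm_nonneg a) (pow_le_one₀ (norm_nonneg q) hq)

lemma norm_qp_le {a q : ℂ} (hq : ‖q‖ ≤ 1) (n : ℕ) : ‖qp a q n‖ ≤ (1 + ‖a‖) ^ n := by
  rw [qp, norm_prod]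
  refine (prod_le_prod (fun _ _ => norm_nonneg _) fun i _ => ?_).trans_eq
    (pow_eq_prod_const _ n).symm
  calc ‖1 - a * q ^ i‖ ≤ ‖(1 : ℂ)‖ + ‖a * q ^ i‖ := norm_sub_le _ _
    _ ≤ 1 + ‖a‖ := by rw [norm_one]; gcongr; exact norm_mul_pow_le hq i

lemma one_sub_norm_pow_le_norm_qp {a q : ℂ} (ha : ‖a‖ ≤ 1) (hq : ‖q‖ ≤ 1) (n : ℕ) :
    (1 - ‖a‖) ^ n ≤ ‖qp a q n‖ := by
  rw [qp, norm_prod]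
  refine (pow_eq_prod_const _ n).trans_le
    (prod_le_prod (fun _ _ => sub_nonneg.2 ha) fun i _ => ?_)
  calc 1 - ‖a‖ ≤ ‖(1 : ℂ)‖ - ‖a * q ^ i‖ := by
        rw [norm_one]; linarith [norm_mul_pow_le (a := a) hq i]
    _ ≤ ‖1 - a * q ^ i‖ := norm_sub_norm_le _ _

lemma qp_ne_zero {a q : ℂ} (ha : ‖a‖ < 1) (hq : ‖q‖ ≤ 1) (n : ℕ) : qp a q n ≠ 0 :=
  norm_pos_iff.1 <|
    (pow_pos (sub_pos.2 ha) n).trans_le (one_sub_norm_pow_le_norm_qp ha.le hq n)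

lemma summable_pow_mul_pow_choose_two_div_norm_qp {a p : ℂ} (ha : ‖a‖ < 1) (hp : ‖p‖ ≤ 1)
    {r : ℝ} (hr₀ : 0 ≤ r) (hr : r < 1) (A : ℝ) :
    Summable fun n => A ^ n * r ^ n.choose 2 / ‖qp a p n‖ := by
  refine (summable_pow_mul_pow_choose_two (A := |A| / (1 - ‖a‖)) hr₀ hr).of_norm_bounded
    fun n => ?_
  have hpos : 0 < (1 - ‖a‖) ^ n := pow_pos (sub_pos.2 ha) n
  rw [div_pow, div_mul_eq_mul_div, norm_div, norm_norm, norm_mul, norm_pow, norm_pow,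
    Real.norm_eq_abs, Real.norm_eq_abs, abs_of_nonneg hr₀]
  exact div_le_div_of_nonneg_left (by positivity) hpos (one_sub_norm_pow_le_norm_qp ha.le hp n)

lemma multipliable_one_sub_mul_pow {q : ℂ} (hq : ‖q‖ < 1) (a : ℂ) :
    Multipliable fun i : ℕ => 1 - a * q ^ i := by
  simp_rw [sub_eq_add_neg]
  refine multipliable_one_add_of_summable ?_
  simpa [norm_mul, norm_pow] using
    (summable_geometric_of_lt_one (norm_nonneg q) hq).mul_left ‖a‖

lemma tendsto_qp_qpInf {q : ℂ} (hq : ‖q‖ < 1) (a : ℂ) :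
    Tendsto (qp a q) atTop (𝓝 (qpInf a q)) :=
  (multipliable_one_sub_mul_pow hq a).hasProd.tendsto_prod_nat

lemma qp_mul_qpInf_mul_pow {q : ℂ} (hq : ‖q‖ < 1) (a : ℂ) (k : ℕ) :
    qp a q k * qpInf (a * q ^ k) q = qpInf a q := by
  have hshift : (fun i => 1 - a * q ^ k * q ^ i) = fun i => 1 - a * q ^ (i + k) := by
    ext i; ring
  rw [qpInf, hshift]
  exact Multipliable.prod_mul_tprod_nat_mul' (hshift ▸ multipliable_one_sub_mul_pow hq _)

noncomputable def eulerCoeff (Q : ℂ) (n : ℕ) : ℂ := (-1) ^ n * Q ^ n.choose 2 / qp Q Q n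

section Euler

variable {Q : ℂ}

lemma norm_eulerCoeff_mul_pow (t : ℂ) (n : ℕ) :
    ‖eulerCoeff Q n * t ^ n‖ = ‖t‖ ^ n * ‖Q‖ ^ n.choose 2 / ‖qp Q Q n‖ := by
  simp only [eulerCoeff, norm_mul, norm_div, norm_pow, norm_neg, norm_one, one_pow, one_mul]
  ring

lemma summable_norm_eulerCoeff_mul_pow (hQ : ‖Q‖ < 1) (t : ℂ) :
    Summable fun n => ‖eulerCoeff Q n * t ^ n‖ := by
  simpa only [norm_eulerCoeff_mul_pow] using
    summable_pow_mul_pow_choose_two_div_norm_qp hQ hQ.le (norm_nonneg Q) hQ ‖t‖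

lemma eulerCoeff_succ_mul (hQ : ‖Q‖ < 1) (n : ℕ) :
    eulerCoeff Q (n + 1) * (1 - Q ^ (n + 1)) = -(Q ^ n * eulerCoeff Q n) := by
  have hqp : qp Q Q (n + 1) = qp Q Q n * (1 - Q ^ (n + 1)) := by rw [qp_succ, pow_succ']
  have hne := mul_ne_zero_iff.1 (hqp ▸ qp_ne_zero hQ hQ.le (n + 1))
  rw [eulerCoeff, eulerCoeff, hqp, Nat.choose_succ_succ', Nat.choose_one_right, pow_add]
  field_simp [hne.1, hne.2]
  ring

lemma tsum_eulerCoeff_mul_pow_eq (hQ : ‖Q‖ < 1) (t : ℂ) :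
    ∑' n, eulerCoeff Q n * t ^ n = (1 - t) * ∑' n, eulerCoeff Q n * (t * Q) ^ n := by
  have hs : ∀ u, Summable fun n => eulerCoeff Q n * u ^ n :=
    fun u => (summable_norm_eulerCoeff_mul_pow hQ u).of_norm
  have hdiff : ∑' n, eulerCoeff Q n * t ^ n - ∑' n, eulerCoeff Q n * (t * Q) ^ n
      = -t * ∑' n, eulerCoeff Q n * (t * Q) ^ n := by
    rw [← (hs t).tsum_sub (hs _), ((hs t).sub (hs _)).tsum_eq_zero_add, ← tsum_mul_left]
    simp only [pow_zero, sub_self, zero_add]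
    refine tsum_congr fun n => ?_
    linear_combination t ^ (n + 1) * eulerCoeff_succ_mul hQ n
  linear_combination hdiff

lemma tsum_eulerCoeff_mul_pow (hQ : ‖Q‖ < 1) (t : ℂ) :
    ∑' n, eulerCoeff Q n * t ^ n = qpInf t Q := by
  set S : ℂ → ℂ := fun u => ∑' n, eulerCoeff Q n * u ^ n
  have hstep : ∀ u, S u = (1 - u) * S (u * Q) := tsum_eulerCoeff_mul_pow_eq hQ
  have hiter : ∀ N, S t = qp t Q N * S (t * Q ^ N) := by
    intro N
    induction N with
    | zero => simp [qp_zero]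
    | succ N ih => rw [ih, hstep, qp_succ, pow_succ, mul_assoc t]; ring
  have hS0 : Tendsto (fun N => S (t * Q ^ N)) atTop (𝓝 1) := by
    have hS_zero : ∑' n, eulerCoeff Q n * (0 : ℂ) ^ n = 1 := by
      rw [tsum_eq_single 0 fun n hn => by simp [hn]]; simp [eulerCoeff, qp_zero]
    rw [← hS_zero]
    refine tendsto_tsum_of_dominated_convergence (summable_norm_eulerCoeff_mul_pow hQ t)
      (fun n => ?_) (Eventually.of_forall fun N n => ?_)
    · have : Tendsto (fun N => t * Q ^ N) atTop (𝓝 0) := by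
        simpa using (tendsto_pow_atTop_nhds_zero_of_norm_lt_one hQ).const_mul t
      exact (this.pow n).const_mul _
    · simp only [norm_mul, norm_pow]
      gcongr
      exact mul_le_of_le_one_right (norm_nonneg t) (pow_le_one₀ (norm_nonneg Q) hQ.le)
  have hlim : Tendsto (fun N => qp t Q N * S (t * Q ^ N)) atTop (𝓝 (qpInf t Q)) := by
    simpa using (tendsto_qp_qpInf hQ t).mul hS0
  exact tendsto_nhds_unique (tendsto_const_nhds.congr hiter) hlim

end Euler

noncomputable def antidiagTerm (q : ℂ) (p : ℕ × ℕ) : ℂ :=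
  (-1) ^ p.1 * q ^ (p.2 * p.2) / (qp q q p.1 * qp (q ^ 2) (q ^ 2) p.2)

section AntidiagTerm

variable {q : ℂ}

lemma antidiagTerm_succ_fst_mul (hq : ‖q‖ < 1) (j l : ℕ) :
    antidiagTerm q (j + 1, l) * (1 - q ^ (j + 1)) = -antidiagTerm q (j, l) := by
  have hne := qp_ne_zero hq hq.le (j + 1)
  simp only [antidiagTerm, qp_succ, ← pow_succ'] at hne ⊢
  field_simp [(mul_ne_zero_iff.1 hne).2]
  ring

lemma antidiagTerm_succ_snd_mul (hq : ‖q‖ < 1) (j l : ℕ) :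
    antidiagTerm q (j, l + 1) * (1 - q ^ (2 * l + 2))
      = q ^ (2 * l + 1) * antidiagTerm q (j, l) := by
  have hq2 : ‖q ^ 2‖ < 1 := norm_pow_lt_one hq two_ne_zero
  have hne := qp_ne_zero hq2 hq2.le (l + 1)
  simp only [antidiagTerm, qp_succ, ← pow_mul, ← pow_add, show 2 + 2 * l = 2 * l + 2 by ring]
    at hne ⊢
  field_simp [(mul_ne_zero_iff.1 hne).2]
  ring

/-- Proof: `1 - q^(2(j+l)) = (1 - q^j)(1 + q^(j+2l)) + q^j (1 - q^(2l))`, and each of the two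
pieces lowers one index of `antidiagTerm`. -/
lemma sum_antidiagonal_succ_antidiagTerm_mul (hq : ‖q‖ < 1) (n : ℕ) :
    (∑ p ∈ antidiagonal (n + 1), antidiagTerm q p) * (1 - q ^ (2 * n + 2))
      = -∑ p ∈ antidiagonal n, antidiagTerm q p := by
  calc (∑ p ∈ antidiagonal (n + 1), antidiagTerm q p) * (1 - q ^ (2 * n + 2))
      = ∑ p ∈ antidiagonal (n + 1),
            antidiagTerm q p * (1 - q ^ p.1) * (1 + q ^ (p.1 + 2 * p.2))
        + ∑ p ∈ antidiagonal (n + 1), q ^ p.1 * (antidiagTerm q p * (1 - q ^ (2 * p.2))) := by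
        rw [sum_mul, ← sum_add_distrib]
        refine sum_congr rfl fun p hp => ?_
        rw [HasAntidiagonal.mem_antidiagonal] at hp
        rw [show 2 * n + 2 = 2 * p.1 + 2 * p.2 by omega]
        ring
    _ = -∑ p ∈ antidiagonal n, antidiagTerm q p := by
        rw [Nat.sum_antidiagonal_succ, Nat.sum_antidiagonal_succ']
        simp only [pow_zero, sub_self, mul_zero, zero_mul, zero_add]
        rw [← sum_add_distrib, ← sum_neg_distrib]
        refine sum_congr rfl fun p _ => ?_
        rw [antidiagTerm_succ_fst_mul hq, mul_add 2 p.2 1, antidiagTerm_succ_snd_mul hq]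
        ring

lemma sum_antidiagonal_antidiagTerm (hq : ‖q‖ < 1) (n : ℕ) :
    ∑ p ∈ antidiagonal n, antidiagTerm q p = (-1) ^ n / qp (q ^ 2) (q ^ 2) n := by
  have hq2 : ‖q ^ 2‖ < 1 := norm_pow_lt_one hq two_ne_zero
  induction n with
  | zero => simp [antidiagTerm, qp_zero]
  | succ n ih =>
    have hqp : qp (q ^ 2) (q ^ 2) (n + 1) = qp (q ^ 2) (q ^ 2) n * (1 - q ^ (2 * n + 2)) := by
      rw [qp_succ, ← pow_mul, ← pow_add, add_comm 2]
    have hne := mul_ne_zero_iff.1 (hqp ▸ qp_ne_zero hq2 hq2.le (n + 1))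
    rw [hqp, eq_div_iff (mul_ne_zero hne.1 hne.2), mul_left_comm,
      sum_antidiagonal_succ_antidiagTerm_mul hq, ih]
    field_simp [hne.1]
    ring

end AntidiagTerm

section Reindexing

variable {E : Type*} [NormedAddCommGroup E] [CompleteSpace E]

lemma Summable.tsum_eq_tsum_sum_antidiagonal {f : ℕ × ℕ → E} (hf : Summable f) :
    ∑' p, f p = ∑' n, ∑ p ∈ antidiagonal n, f p := by
  let e := HasAntidiagonal.sigmaAntidiagonalEquivProd (A := ℕ)
  have hfe : Summable fun c => f (e c) := e.summable_iff.2 hf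
  rw [← e.tsum_eq, hfe.tsum_sigma]
  exact tsum_congr fun n => tsum_subtype (antidiagonal n) f

lemma tsum_tsum_tsum_eq_tsum_tsum_prod {α β γ : Type*} {f : α → β → γ → E}
    (hf : Summable fun p : β × α × γ => f p.2.1 p.1 p.2.2) :
    ∑' a, ∑' b, ∑' c, f a b c = ∑' b, ∑' p : α × γ, f p.1 b p.2 := by
  let e : α × β × γ ≃ β × α × γ := (Equiv.prodAssoc α β γ).symm.trans
    (((Equiv.prodComm α β).prodCongr (Equiv.refl γ)).trans (Equiv.prodAssoc β α γ))
  have hf' : Summable fun p : α × β × γ => f p.1 p.2.1 p.2.2 := e.summable_iff.2 hf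
  rw [← hf.tsum_prod, ← e.tsum_eq]
  change _ = ∑' p : α × β × γ, f p.1 p.2.1 p.2.2
  rw [hf'.tsum_prod]
  exact tsum_congr fun a => (hf'.prod_factor a).tsum_prod.symm

end Reindexing

/-- `q^(n(n-1))` is written as `(q²)^(n choose 2)`. -/
noncomputable def pairTerm (q y : ℂ) (p : ℕ × ℕ) : ℂ :=
  (q ^ 2) ^ (p.1 + p.2).choose 2 * y ^ (p.1 + p.2) * antidiagTerm q p

section PairTerm

variable {q : ℂ}

lemma norm_pairTerm_le {y : ℂ} {R : ℝ} (hq : ‖q‖ < 1) (hy : ‖y‖ ≤ R) (p : ℕ × ℕ) :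
    ‖pairTerm q y p‖ ≤ R ^ p.1 * ‖q ^ 2‖ ^ p.1.choose 2 / ‖qp q q p.1‖ *
      (R ^ p.2 * ‖q ^ 2‖ ^ p.2.choose 2 / ‖qp (q ^ 2) (q ^ 2) p.2‖) := by
  obtain ⟨j, l⟩ := p
  have hq2 : ‖q ^ 2‖ ≤ 1 := (norm_pow_lt_one hq two_ne_zero).le
  have hqpow : ‖q ^ 2‖ ^ (j + l).choose 2 * ‖q‖ ^ (l * l)
      ≤ ‖q ^ 2‖ ^ j.choose 2 * ‖q ^ 2‖ ^ l.choose 2 := by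
    rw [← pow_add]
    refine (mul_le_of_le_one_right (by positivity) (pow_le_one₀ (norm_nonneg q) hq.le)).trans ?_
    exact pow_le_pow_of_le_one (norm_nonneg _) hq2 (by rw [Nat.add_choose_two]; omega)
  have hypow : ‖y‖ ^ (j + l) ≤ R ^ j * R ^ l := by
    rw [← pow_add]; exact pow_le_pow_left₀ (norm_nonneg y) hy _
  calc ‖pairTerm q y (j, l)‖
      = ‖q ^ 2‖ ^ (j + l).choose 2 * ‖q‖ ^ (l * l) * ‖y‖ ^ (j + l) /
          (‖qp q q j‖ * ‖qp (q ^ 2) (q ^ 2) l‖) := by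
        simp only [pairTerm, antidiagTerm, norm_mul, norm_div, norm_pow, norm_neg, norm_one,
          one_pow, one_mul]
        ring
    _ ≤ ‖q ^ 2‖ ^ j.choose 2 * ‖q ^ 2‖ ^ l.choose 2 * (R ^ j * R ^ l) /
          (‖qp q q j‖ * ‖qp (q ^ 2) (q ^ 2) l‖) := by
        gcongr
    _ = _ := by ring

lemma summable_pairTerm_majorant (hq : ‖q‖ < 1) {R : ℝ} (hR : 0 ≤ R) :
    Summable fun p : ℕ × ℕ => R ^ p.1 * ‖q ^ 2‖ ^ p.1.choose 2 / ‖qp q q p.1‖ *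
      (R ^ p.2 * ‖q ^ 2‖ ^ p.2.choose 2 / ‖qp (q ^ 2) (q ^ 2) p.2‖) := by
  have hq2 : ‖q ^ 2‖ < 1 := norm_pow_lt_one hq two_ne_zero
  exact Summable.mul_of_nonneg
    (summable_pow_mul_pow_choose_two_div_norm_qp hq hq.le (norm_nonneg _) hq2 R)
    (summable_pow_mul_pow_choose_two_div_norm_qp hq2 hq2.le (norm_nonneg _) hq2 R)
    (fun _ => by positivity) (fun _ => by positivity)

lemma tsum_pairTerm (hq : ‖q‖ < 1) (y : ℂ) : ∑' p, pairTerm q y p = qpInf y (q ^ 2) := by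
  have hq2 : ‖q ^ 2‖ < 1 := norm_pow_lt_one hq two_ne_zero
  have hsum : Summable (pairTerm q y) :=
    (summable_pairTerm_majorant hq (norm_nonneg y)).of_norm_bounded (norm_pairTerm_le hq le_rfl)
  rw [hsum.tsum_eq_tsum_sum_antidiagonal, ← tsum_eulerCoeff_mul_pow hq2]
  refine tsum_congr fun n => ?_
  have hfactor : ∀ p ∈ antidiagonal n,
      pairTerm q y p = (q ^ 2) ^ n.choose 2 * y ^ n * antidiagTerm q p := by
    intro p hp
    rw [HasAntidiagonal.mem_antidiagonal] at hp
    rw [pairTerm, hp]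
  rw [sum_congr rfl hfactor, ← mul_sum, sum_antidiagonal_antidiagTerm hq, eulerCoeff]
  ring

end PairTerm

lemma summand_eq_mul_pairTerm (q x : ℂ) (j k l : ℕ) :
    qp x (q ^ 2) k * x ^ (j + l) * (-1) ^ (j + k)
        * q ^ (((j:ℤ)+(k:ℤ)+(l:ℤ)) * ((j:ℤ)+(k:ℤ)+(l:ℤ)-1) + (l:ℤ)^2 + 3*(k:ℤ))
        / (qp q q j * qp (q ^ 2) (q ^ 2) k * qp (q ^ 2) (q ^ 2) l)
      = qp x (q ^ 2) k * eulerCoeff (q ^ 2) k * (q ^ 3) ^ k *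
          pairTerm q (x * (q ^ 2) ^ k) (j, l) := by
  have hexp : ((j:ℤ)+(k:ℤ)+(l:ℤ)) * ((j:ℤ)+(k:ℤ)+(l:ℤ)-1) + (l:ℤ)^2 + 3*(k:ℤ)
      = ((2 * ((j + l).choose 2 + k.choose 2 + (j + l) * k) + l * l + 3 * k : ℕ) : ℤ) := by
    have h := Nat.two_mul_choose_two_intCast (j + l + k)
    rw [Nat.add_choose_two] at h
    push_cast at h ⊢
    linear_combination -h
  rw [hexp, zpow_natCast, pairTerm, antidiagTerm, eulerCoeff]
  ring

lemma summable_mul_pairTerm {q : ℂ} (hq : ‖q‖ < 1) (x : ℂ) :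
    Summable fun p : ℕ × ℕ × ℕ =>
      qp x (q ^ 2) p.1 * eulerCoeff (q ^ 2) p.1 * (q ^ 3) ^ p.1 *
        pairTerm q (x * (q ^ 2) ^ p.1) p.2 := by
  have hq2 : ‖q ^ 2‖ < 1 := norm_pow_lt_one hq two_ne_zero
  have hβ : Summable fun k : ℕ =>
      (1 + ‖x‖) ^ k * ‖q ^ 2‖ ^ k.choose 2 / ‖qp (q ^ 2) (q ^ 2) k‖ :=
    summable_pow_mul_pow_choose_two_div_norm_qp hq2 hq2.le (norm_nonneg _) hq2 _
  refine (hβ.mul_of_nonneg (summable_pairTerm_majorant hq (norm_nonneg x))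
    (fun _ => by positivity) (fun _ => by positivity)).of_norm_bounded fun ⟨k, p⟩ => ?_
  rw [norm_mul]
  refine mul_le_mul ?_ (norm_pairTerm_le hq (norm_mul_pow_le hq2.le k) p) (norm_nonneg _)
    (by positivity)
  calc ‖qp x (q ^ 2) k * eulerCoeff (q ^ 2) k * (q ^ 3) ^ k‖
      = ‖qp x (q ^ 2) k‖ * (‖q ^ 3‖ ^ k * ‖q ^ 2‖ ^ k.choose 2 / ‖qp (q ^ 2) (q ^ 2) k‖) := by
        rw [mul_assoc, norm_mul, norm_eulerCoeff_mul_pow]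
    _ ≤ (1 + ‖x‖) ^ k * (1 ^ k * ‖q ^ 2‖ ^ k.choose 2 / ‖qp (q ^ 2) (q ^ 2) k‖) := by
        gcongr
        · exact norm_qp_le hq2.le k
        · exact (norm_pow_lt_one hq three_ne_zero).le
    _ = _ := by rw [one_pow, one_mul, mul_div_assoc]

theorem stmt15 (q x : ℂ) (hq : ‖q‖ < 1) :
    (∑' j : ℕ, ∑' k : ℕ, ∑' l : ℕ,
      qp x (q^2) k * x ^ (j + l) * (-1) ^ (j + k)
        * q ^ (((j:ℤ)+(k:ℤ)+(l:ℤ)) * ((j:ℤ)+(k:ℤ)+(l:ℤ)-1) + (l:ℤ)^2 + 3*(k:ℤ))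
        / (qp q q j * qp (q^2) (q^2) k * qp (q^2) (q^2) l))
    = qpInf (q^3) (q^2) * qpInf x (q^2) := by
  have hq2 : ‖q ^ 2‖ < 1 := norm_pow_lt_one hq two_ne_zero
  simp_rw [summand_eq_mul_pairTerm]
  rw [tsum_tsum_tsum_eq_tsum_tsum_prod (f := fun j k l =>
    qp x (q ^ 2) k * eulerCoeff (q ^ 2) k * (q ^ 3) ^ k * pairTerm q (x * (q ^ 2) ^ k) (j, l))
    (summable_mul_pairTerm hq x)]
  have hinner : ∀ k, ∑' p : ℕ × ℕ, qp x (q ^ 2) k * eulerCoeff (q ^ 2) k * (q ^ 3) ^ k *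
      pairTerm q (x * (q ^ 2) ^ k) p = qpInf x (q ^ 2) * (eulerCoeff (q ^ 2) k * (q ^ 3) ^ k) := by
    intro k
    rw [tsum_mul_left, tsum_pairTerm hq, ← qp_mul_qpInf_mul_pow hq2 x k]
    ring
  rw [tsum_congr hinner, tsum_mul_left, tsum_eulerCoeff_mul_pow hq2, mul_comm]
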